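/- Define m : (0,∞) → ℝ by m(Q) = log Q − (Q²−1)(2Q−1)/(Q(Q²−2Q+3)). Then: m(1) = 0; m(Q) → +∞ as Q → +∞; m is differentiable on (0,∞) with m′(Q) = (Q−3)(Q−1)(Q+1)³/(Q²(Q²−2Q+3)²); there exists a unique Q* ∈ (1,∞) with m(Q*) = 0; Q* > 3; and for every Q ∈ (1,∞), m(Q) ≤ 0 if and only if Q ≤ Q*. -/

import Mathlib

/-!
`m(1) = 0` and the sign of `m'` is that of `(Q - 3)(Q - 1)`, so `m` decreases strictly on
`[1, 3]`, and is therefore negative on `(1, 3]`, and increases strictly on `[3, ∞)`. Since the rational part of `m` stays bounded while `log Q → ∞`, `m` has exactly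
one zero `Q*` in `(1, ∞)`, found by the intermediate value theorem on `[3, ∞)`.
-/

/-- The function `m(Q) = log Q − (Q²−1)(2Q−1)/(Q(Q²−2Q+3))` governing calibrability
of annuli in dimension `n = 2`. -/
noncomputable def mfun (Q : ℝ) : ℝ :=
  Real.log Q - (Q ^ 2 - 1) * (2 * Q - 1) / (Q * (Q ^ 2 - 2 * Q + 3))

open Set Filter

lemma sq_sub_two_mul_add_three_pos (x : ℝ) : 0 < x ^ 2 - 2 * x + 3 := by
  nlinarith [sq_nonneg (x - 1)]

lemma hasDerivAt_mfun {Q : ℝ} (hQ : 0 < Q) :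
    HasDerivAt mfun
      ((Q - 3) * (Q - 1) * (Q + 1) ^ 3 / (Q ^ 2 * (Q ^ 2 - 2 * Q + 3) ^ 2)) Q := by
  have hQ0 : Q ≠ 0 := hQ.ne'
  have hD := (sq_sub_two_mul_add_three_pos Q).ne'
  have hden : Q * (Q ^ 2 - 2 * Q + 3) ≠ 0 := mul_ne_zero hQ0 hD
  have hnum : HasDerivAt (fun x : ℝ => (x ^ 2 - 1) * (2 * x - 1)) (6 * Q ^ 2 - 2 * Q - 2) Q := by
    refine (((hasDerivAt_pow 2 Q).sub_const 1).mul
      (((hasDerivAt_id Q).const_mul 2).sub_const 1)).congr_deriv ?_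
    simp only [id_eq]; ring
  have hdenom : HasDerivAt (fun x : ℝ => x * (x ^ 2 - 2 * x + 3)) (3 * Q ^ 2 - 4 * Q + 3) Q := by
    refine ((hasDerivAt_id Q).mul
      (((hasDerivAt_pow 2 Q).sub ((hasDerivAt_id Q).const_mul 2)).add_const 3)).congr_deriv ?_
    simp only [Pi.sub_apply, id_eq]; ring
  refine ((Real.hasDerivAt_log hQ0).sub (hnum.div hdenom hden)).congr_deriv ?_
  rw [inv_eq_one_div, div_sub_div _ _ hQ0 (pow_ne_zero 2 hden),
    div_eq_div_iff (by positivity) (by positivity)]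
  ring

lemma continuousOn_mfun : ContinuousOn mfun (Ioi 0) := fun _ hx =>
  (hasDerivAt_mfun hx).continuousAt.continuousWithinAt

lemma mfun_one : mfun 1 = 0 := by norm_num [mfun]

lemma strictAntiOn_mfun : StrictAntiOn mfun (Icc 1 3) := by
  apply strictAntiOn_of_deriv_neg (convex_Icc 1 3)
  · exact continuousOn_mfun.mono fun x hx => by simp only [mem_Ioi]; linarith [hx.1]
  · intro x hx
    rw [interior_Icc] at hx
    obtain ⟨h1, h3⟩ := hx
    rw [(hasDerivAt_mfun (by linarith)).deriv]
    have := sq_sub_two_mul_add_three_pos x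
    exact div_neg_of_neg_of_pos
      (mul_neg_of_neg_of_pos (mul_neg_of_neg_of_pos (by linarith) (by linarith)) (by positivity))
      (by positivity)

lemma strictMonoOn_mfun : StrictMonoOn mfun (Ici 3) := by
  apply strictMonoOn_of_deriv_pos (convex_Ici 3)
  · exact continuousOn_mfun.mono fun x hx => by simp only [mem_Ioi]; linarith [mem_Ici.1 hx]
  · intro x hx
    rw [interior_Ici, mem_Ioi] at hx
    rw [(hasDerivAt_mfun (by linarith)).deriv]
    have := sq_sub_two_mul_add_three_pos x
    exact div_pos (mul_pos (mul_pos (by linarith) (by linarith)) (by positivity)) (by positivity)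

lemma mfun_neg {Q : ℝ} (h1 : 1 < Q) (h3 : Q ≤ 3) : mfun Q < 0 :=
  mfun_one ▸ strictAntiOn_mfun (left_mem_Icc.2 (by norm_num)) ⟨h1.le, h3⟩ h1

lemma tendsto_mfun_atTop : Tendsto mfun atTop atTop := by
  have hbound : ∀ᶠ Q : ℝ in atTop, Real.log Q + -6 ≤ mfun Q := by
    filter_upwards [eventually_ge_atTop (3 : ℝ)] with Q hQ
    have hden : 0 < Q * (Q ^ 2 - 2 * Q + 3) :=
      mul_pos (by linarith) (sq_sub_two_mul_add_three_pos Q)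
    have : (Q ^ 2 - 1) * (2 * Q - 1) / (Q * (Q ^ 2 - 2 * Q + 3)) ≤ 6 := by
      rw [div_le_iff₀ hden]
      nlinarith
    rw [mfun]
    linarith
  exact tendsto_atTop_mono' _ hbound (tendsto_atTop_add_const_right _ _ Real.tendsto_log_atTop)

lemma exists_mfun_eq_zero : ∃ Qs, 3 < Qs ∧ mfun Qs = 0 := by
  obtain ⟨B, hB0, hB3⟩ :=
    ((tendsto_mfun_atTop.eventually_ge_atTop 0).and (eventually_ge_atTop (3 : ℝ))).exists
  have hcont : ContinuousOn mfun (Icc 3 B) :=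
    continuousOn_mfun.mono fun x hx => by simp only [mem_Ioi]; linarith [hx.1]
  obtain ⟨Qs, hQs, hQs0⟩ :=
    intermediate_value_Icc hB3 hcont ⟨(mfun_neg (by norm_num) le_rfl).le, hB0⟩
  refine ⟨Qs, hQs.1.lt_of_ne ?_, hQs0⟩
  rintro rfl
  exact (mfun_neg (by norm_num) le_rfl).ne hQs0

section
variable {Qs : ℝ} (hQs : 3 < Qs) (hQs0 : mfun Qs = 0)
include hQs hQs0

lemma mfun_nonpos_iff {Q : ℝ} (hQ : 1 < Q) : mfun Q ≤ 0 ↔ Q ≤ Qs := by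
  rcases le_or_gt Q 3 with h3 | h3
  · exact iff_of_true (mfun_neg hQ h3).le (by linarith)
  · rw [← hQs0]
    exact strictMonoOn_mfun.le_iff_le (mem_Ici.2 h3.le) (mem_Ici.2 hQs.le)

lemma eq_of_mfun_eq_zero {Q : ℝ} (hQ : 1 < Q) (hQ0 : mfun Q = 0) : Q = Qs := by
  rcases le_or_gt Q 3 with h3 | h3
  · exact absurd hQ0 (mfun_neg hQ h3).ne
  · exact strictMonoOn_mfun.injOn (mem_Ici.2 h3.le) (mem_Ici.2 hQs.le) (hQ0.trans hQs0.symm)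

end

/-- Properties of `m`: `m(1) = 0`, `m → +∞` at `+∞`, the derivative formula on `(0,∞)`,
and existence of a unique zero `Q* ∈ (1,∞)`, which satisfies `Q* > 3` and
`m(Q) ≤ 0 ↔ Q ≤ Q*` for `Q > 1`. -/
theorem stmt_7 :
    mfun 1 = 0 ∧
    Filter.Tendsto mfun Filter.atTop Filter.atTop ∧
    (∀ Q : ℝ, 0 < Q →
      HasDerivAt mfun
        ((Q - 3) * (Q - 1) * (Q + 1) ^ 3 / (Q ^ 2 * (Q ^ 2 - 2 * Q + 3) ^ 2)) Q) ∧
    ∃ Qs : ℝ, 1 < Qs ∧ mfun Qs = 0 ∧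
      (∀ Q : ℝ, 1 < Q → mfun Q = 0 → Q = Qs) ∧
      3 < Qs ∧
      (∀ Q : ℝ, 1 < Q → (mfun Q ≤ 0 ↔ Q ≤ Qs)) := by
  obtain ⟨Qs, hQs, hQs0⟩ := exists_mfun_eq_zero
  exact ⟨mfun_one, tendsto_mfun_atTop, fun Q hQ => hasDerivAt_mfun hQ, Qs, by linarith, hQs0,
    fun Q hQ => eq_of_mfun_eq_zero hQs hQs0 hQ, hQs,
    fun Q hQ => mfun_nonpos_iff hQs hQs0 hQ⟩
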